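/- With W, E, η, ε as in the normalization-error setting and ε < η, the diagonal matrices D = diag(W·1) and D_E = diag((W+E)·1) satisfy ‖D^{-1/2} - D_E^{-1/2}‖_∞ ≤ ((η - ε)^{-1/2} - η^{-1/2}) ‖W‖_∞^{-1/2}. -/

import Mathlib

open Matrix BigOperators Real

/-! Each row of `D^{-1/2} - D_E^{-1/2}` has the single entry `dᵢ^{-1/2} - d_{E,i}^{-1/2}`, where
`dᵢ ≥ d_min`, `d_{E,i} ≥ d_min - ‖E‖_∞` and `|d_{E,i} - dᵢ| ≤ ‖E‖_∞`. Writing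
`x^{-1/2} - y^{-1/2} = (y - x) / (√x √y (√x + √y))`, the numerator is at most `‖E‖_∞` and the
denominator is smallest at `(x, y) = (d_min, d_min - ‖E‖_∞)`, so every entry is bounded by
`(d_min - ‖E‖_∞)^{-1/2} - d_min^{-1/2}`; dividing `d_min` and `‖E‖_∞` by `‖W‖_∞` turns this into
the stated bound. -/

theorem Real.inv_sqrt_sub_inv_sqrt {x y : ℝ} (hx : 0 < x) (hy : 0 < y) :
    (√x)⁻¹ - (√y)⁻¹ = (y - x) / (√x * √y * (√x + √y)) := by
  have hx' := Real.sqrt_pos.mpr hx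
  have hy' := Real.sqrt_pos.mpr hy
  field_simp
  linear_combination Real.sq_sqrt hy.le - Real.sq_sqrt hx.le

theorem Real.abs_inv_sqrt_sub_inv_sqrt_le {a b x y : ℝ} (hb : 0 < b) (hax : a ≤ x) (hby : b ≤ y)
    (hxy : |y - x| ≤ a - b) :
    |(√x)⁻¹ - (√y)⁻¹| ≤ (√b)⁻¹ - (√a)⁻¹ := by
  have ha : 0 < a := by linarith [abs_nonneg (y - x)]
  have hx : 0 < x := ha.trans_le hax
  have hy : 0 < y := hb.trans_le hby
  have hsa := Real.sqrt_pos.mpr ha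
  have hsy := Real.sqrt_pos.mpr hy
  have hsax : √a ≤ √x := Real.sqrt_le_sqrt hax
  have hsby : √b ≤ √y := Real.sqrt_le_sqrt hby
  rw [inv_sqrt_sub_inv_sqrt hx hy, inv_sqrt_sub_inv_sqrt hb ha, abs_div,
    abs_of_pos (by positivity : 0 < √x * √y * (√x + √y))]
  refine div_le_div₀ (by linarith [abs_nonneg (y - x)]) hxy (by positivity) ?_
  calc √b * √a * (√b + √a) ≤ √y * √x * (√y + √x) := by gcongr
    _ = √x * √y * (√x + √y) := by ring

theorem Real.rpow_neg_one_half {t : ℝ} (ht : 0 ≤ t) : t ^ (-(1 : ℝ) / 2) = (√t)⁻¹ := by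
  rw [neg_div, Real.rpow_neg ht, ← Real.sqrt_eq_rpow]

theorem Real.div_rpow_sub_div_rpow_mul_rpow {a b N : ℝ} (ha : 0 ≤ a) (hb : 0 ≤ b) (hN : 0 < N)
    (p : ℝ) : ((a / N) ^ p - (b / N) ^ p) * N ^ p = a ^ p - b ^ p := by
  have hNp : N ^ p ≠ 0 := (Real.rpow_pos_of_pos hN p).ne'
  rw [Real.div_rpow ha hN.le, Real.div_rpow hb hN.le, ← sub_div, div_mul_cancel₀ _ hNp]

theorem Matrix.sum_abs_diagonal_apply {n : Type*} [Fintype n] [DecidableEq n] (v : n → ℝ) (i : n) :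
    ∑ j, |diagonal v i j| = |v i| := by
  simp [diagonal_apply, apply_ite]

theorem Matrix.add_mulVec_sub_mulVec {m n : Type*} [Fintype n] (W E : Matrix m n ℝ) (v : n → ℝ) :
    (W + E) *ᵥ v - W *ᵥ v = E *ᵥ v := by
  rw [add_mulVec, add_sub_cancel_left]

theorem Matrix.abs_mulVec_one_le_iSup {m n : Type*} [Finite m] [Fintype n] (E : Matrix m n ℝ) (i : m) :
    |(E *ᵥ fun _ => 1) i| ≤ ⨆ i, ∑ j, |E i j| := by
  calc |(E *ᵥ fun _ => 1) i| = |∑ j, E i j| := by simp [mulVec, dotProduct]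
    _ ≤ ∑ j, |E i j| := Finset.abs_sum_le_sum_abs _ _
    _ ≤ ⨆ i, ∑ j, |E i j| := le_ciSup (f := fun i => ∑ j, |E i j|) (Set.finite_range _).bddAbove i

theorem inv_sqrt_degree_perturbation_bound_general
    (n : ℕ) (W E : Matrix (Fin n) (Fin n) ℝ)
    (d dE : Fin n → ℝ)
    (hd : d = W *ᵥ (fun _ => 1)) (hdE : dE = (W + E) *ᵥ (fun _ => 1))
    (normW normE dmin eta eps : ℝ)
    (hnormW : normW = ⨆ i, ∑ j, |W i j|)
    (hnormE : normE = ⨆ i, ∑ j, |E i j|)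
    (hdmin : dmin = ⨅ i, d i)
    (heta : eta = dmin / normW)
    (heps : eps = normE / normW)
    (hlt : eps < eta)
    (Dinvsqrt DEinvsqrt : Matrix (Fin n) (Fin n) ℝ)
    (hDinv : Dinvsqrt = Matrix.diagonal (fun i => (Real.sqrt (d i))⁻¹))
    (hDEinv : DEinvsqrt = Matrix.diagonal (fun i => (Real.sqrt (dE i))⁻¹)) :
    (⨆ i, ∑ j, |(Dinvsqrt - DEinvsqrt) i j|) ≤
      ((eta - eps) ^ (-(1 : ℝ) / 2) - eta ^ (-(1 : ℝ) / 2)) * normW ^ (-(1 : ℝ) / 2) := by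
  have hnormE₀ : 0 ≤ normE := hnormE ▸ Real.iSup_nonneg fun _ => by positivity
  have hnormW₀ : 0 < normW := by
    refine lt_of_le_of_ne (hnormW ▸ Real.iSup_nonneg fun _ => by positivity) fun h => ?_
    simp [heta, heps, ← h] at hlt
  have hE : normE < dmin := by rwa [heps, heta, div_lt_div_iff_of_pos_right hnormW₀] at hlt
  have hdmin_le : ∀ i, dmin ≤ d i := fun i => hdmin ▸ ciInf_le (Set.finite_range _).bddBelow i
  have hdiff : ∀ i, |dE i - d i| ≤ normE := fun i => by
    rw [hdE, hd, ← Pi.sub_apply, add_mulVec_sub_mulVec, hnormE]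
    exact abs_mulVec_one_le_iSup E i
  have hRHS : ((eta - eps) ^ (-(1 : ℝ) / 2) - eta ^ (-(1 : ℝ) / 2)) * normW ^ (-(1 : ℝ) / 2)
      = (√(dmin - normE))⁻¹ - (√dmin)⁻¹ := by
    rw [heta, heps, ← sub_div, div_rpow_sub_div_rpow_mul_rpow (by linarith) (by linarith) hnormW₀,
      rpow_neg_one_half (by linarith), rpow_neg_one_half (by linarith)]
  rw [hRHS, hDinv, hDEinv, diagonal_sub]
  refine Real.iSup_le (fun i => ?_) ?_
  · rw [sum_abs_diagonal_apply]
    refine abs_inv_sqrt_sub_inv_sqrt_le (by linarith) (hdmin_le i) ?_ (by rw [sub_sub_cancel]; exact hdiff i)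
    linarith [hdmin_le i, (abs_le.mp (hdiff i)).1]
  · exact sub_nonneg.mpr (inv_anti₀ (Real.sqrt_pos.mpr (by linarith)) (Real.sqrt_le_sqrt (by linarith)))

theorem inv_sqrt_degree_perturbation_bound
    (n : ℕ) (hn : 0 < n) (W E : Matrix (Fin n) (Fin n) ℝ)
    (hnonneg : ∀ i j, 0 ≤ W i j) (hpos : ∀ i, ∃ j, 0 < W i j)
    (d dE : Fin n → ℝ)
    (hd : d = W *ᵥ (fun _ => 1)) (hdE : dE = (W + E) *ᵥ (fun _ => 1))
    (normW normE dmin eta eps : ℝ)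
    (hnormW : normW = ⨆ i, ∑ j, |W i j|)
    (hnormE : normE = ⨆ i, ∑ j, |E i j|)
    (hdmin : dmin = ⨅ i, d i)
    (heta : eta = dmin / normW)
    (heps : eps = normE / normW)
    (hlt : eps < eta)
    (Dinvsqrt DEinvsqrt : Matrix (Fin n) (Fin n) ℝ)
    (hDinv : Dinvsqrt = Matrix.diagonal (fun i => (Real.sqrt (d i))⁻¹))
    (hDEinv : DEinvsqrt = Matrix.diagonal (fun i => (Real.sqrt (dE i))⁻¹)) :
    (⨆ i, ∑ j, |(Dinvsqrt - DEinvsqrt) i j|) ≤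
      ((eta - eps) ^ (-(1 : ℝ) / 2) - eta ^ (-(1 : ℝ) / 2)) * normW ^ (-(1 : ℝ) / 2) :=
  inv_sqrt_degree_perturbation_bound_general n W E d dE hd hdE normW normE dmin eta eps hnormW
    hnormE hdmin heta heps hlt Dinvsqrt DEinvsqrt hDinv hDEinv
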